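/- A basic sequence on the edgeless cube Q_L is universally convergent if and only if it is twist-finite. The same equivalence holds for the edged cube Q̄_L. -/

import Mathlib

universe u v

namespace InfRubik

/-- The three axes of the cube. -/
inductive Axis : Type
  | x | y | z
  deriving DecidableEq

/-- The six colors of the Rubik's cube.  A *configuration* is a map from cells to
`Option Color`, where `none` plays the role of the non-color `NaC`. -/
inductive Color : Type
  | red | white | green | orange | yellow | blue
  deriving DecidableEq

/-- The set `L̄† = -L ∪ {0} ∪ L ∪ {±∞}` of extended coordinates. -/
inductive ExtCoord (L : Type u) : Type u
  | neg : L → ExtCoord L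
  | zero : ExtCoord L
  | pos : L → ExtCoord L
  | negInf : ExtCoord L
  | posInf : ExtCoord L

namespace ExtCoord

variable {L : Type u}

/-- The reflection `r ↦ -r`. -/
def reflect : ExtCoord L → ExtCoord L
  | .neg r => .pos r
  | .zero => .zero
  | .pos r => .neg r
  | .negInf => .posInf
  | .posInf => .negInf

@[simp] theorem reflect_reflect (a : ExtCoord L) : a.reflect.reflect = a := by
  cases a <;> rfl

/-- Whether a coordinate is `±∞`. -/
def isInfB : ExtCoord L → Bool
  | .negInf => true
  | .posInf => true
  | _ => false

@[simp] theorem isInfB_reflect (a : ExtCoord L) : a.reflect.isInfB = a.isInfB := by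
  cases a <;> rfl

/-- Whether a coordinate is `0`. -/
def isZeroB : ExtCoord L → Bool
  | .zero => true
  | _ => false

@[simp] theorem isZeroB_reflect (a : ExtCoord L) : a.reflect.isZeroB = a.isZeroB := by
  cases a <;> rfl

end ExtCoord

/-- A point of the ambient space `L̄† × L̄† × L̄†`. -/
abbrev Triple (L : Type u) := ExtCoord L × ExtCoord L × ExtCoord L

/-- The coordinate of a point along an axis. -/
def Triple.coord {L : Type u} : Axis → Triple L → ExtCoord L
  | .x, p => p.1
  | .y, p => p.2.1
  | .z, p => p.2.2

/-- Quarter-turn rotation of the ambient space about an axis (right-hand rule). -/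
def rot {L : Type u} : Axis → Triple L → Triple L
  | .x, p => (p.1, p.2.2.reflect, p.2.1)
  | .y, p => (p.2.2, p.2.1, p.1.reflect)
  | .z, p => (p.2.1.reflect, p.1, p.2.2)

/-- Inverse quarter-turn rotation of the ambient space about an axis. -/
def rotInv {L : Type u} : Axis → Triple L → Triple L
  | .x, p => (p.1, p.2.2, p.2.1.reflect)
  | .y, p => (p.2.2.reflect, p.2.1, p.1)
  | .z, p => (p.2.1, p.1.reflect, p.2.2)

@[simp] theorem rotInv_rot {L : Type u} (i : Axis) (p : Triple L) : rotInv i (rot i p) = p := by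
  cases i <;> simp [rot, rotInv]

@[simp] theorem rot_rotInv {L : Type u} (i : Axis) (p : Triple L) : rot i (rotInv i p) = p := by
  cases i <;> simp [rot, rotInv]

/-- The number of infinite coordinates of a point. -/
def infCount {L : Type u} (p : Triple L) : ℕ :=
  (if p.1.isInfB then 1 else 0) + (if p.2.1.isInfB then 1 else 0) +
    (if p.2.2.isInfB then 1 else 0)

/-- The number of zero coordinates of a point. -/
def zeroCount {L : Type u} (p : Triple L) : ℕ :=
  (if p.1.isZeroB then 1 else 0) + (if p.2.1.isZeroB then 1 else 0) +
    (if p.2.2.isZeroB then 1 else 0)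

theorem infCount_rot {L : Type u} (i : Axis) (p : Triple L) : infCount (rot i p) = infCount p := by
  obtain ⟨a, b, c⟩ := p
  cases i <;> cases a <;> cases b <;> cases c <;> rfl

theorem infCount_rotInv {L : Type u} (i : Axis) (p : Triple L) :
    infCount (rotInv i p) = infCount p := by
  obtain ⟨a, b, c⟩ := p
  cases i <;> cases a <;> cases b <;> cases c <;> rfl

@[simp] theorem coord_rot_self {L : Type u} (i : Axis) (p : Triple L) :
    (rot i p).coord i = p.coord i := by
  cases i <;> rfl

@[simp] theorem coord_rotInv_self {L : Type u} (i : Axis) (p : Triple L) :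
    (rotInv i p).coord i = p.coord i := by
  cases i <;> rfl

/-- A cell of the *edgeless* cube `Q_L`: a point of the ambient space with exactly one
infinite coordinate. -/
def Cell (L : Type u) : Type u := {p : Triple L // infCount p = 1}

open Classical in
/-- The underlying map on points of the quarter-turn twist `T_{i,α}`. -/
noncomputable def qtTriple {L : Type u} (i : Axis) (α : ExtCoord L) (p : Triple L) : Triple L :=
  if p.coord i = α then rot i p else p

open Classical in
/-- The underlying map on points of the inverse quarter-turn twist `T_{i,α}⁻¹`. -/
noncomputable def qtTripleInv {L : Type u} (i : Axis) (α : ExtCoord L) (p : Triple L) : Triple L :=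
  if p.coord i = α then rotInv i p else p

theorem qtTripleInv_qtTriple {L : Type u} (i : Axis) (α : ExtCoord L) (p : Triple L) :
    qtTripleInv i α (qtTriple i α p) = p := by
  classical
  by_cases h : p.coord i = α <;> simp [qtTriple, qtTripleInv, h]

theorem qtTriple_qtTripleInv {L : Type u} (i : Axis) (α : ExtCoord L) (p : Triple L) :
    qtTriple i α (qtTripleInv i α p) = p := by
  classical
  by_cases h : p.coord i = α <;> simp [qtTriple, qtTripleInv, h]

theorem infCount_qtTriple {L : Type u} (i : Axis) (α : ExtCoord L) (p : Triple L) :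
    infCount (qtTriple i α p) = infCount p := by
  classical
  by_cases h : p.coord i = α <;> simp [qtTriple, h, infCount_rot]

theorem infCount_qtTripleInv {L : Type u} (i : Axis) (α : ExtCoord L) (p : Triple L) :
    infCount (qtTripleInv i α p) = infCount p := by
  classical
  by_cases h : p.coord i = α <;> simp [qtTripleInv, h, infCount_rotInv]

/-- The quarter-turn twist `T_{i,α}` of the edgeless cube, as a permutation of cells. -/
noncomputable def quarterTurn {L : Type u} (i : Axis) (α : ExtCoord L) : Equiv.Perm (Cell L) where
  toFun c := ⟨qtTriple i α c.1, by rw [infCount_qtTriple]; exact c.2⟩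
  invFun c := ⟨qtTripleInv i α c.1, by rw [infCount_qtTripleInv]; exact c.2⟩
  left_inv c := Subtype.ext (qtTripleInv_qtTriple i α c.1)
  right_inv c := Subtype.ext (qtTriple_qtTripleInv i α c.1)

/-- The basic twists of the edgeless cube: quarter turns, half turns and reverse
quarter turns of a single layer. -/
def IsBasic (L : Type u) (π : Equiv.Perm (Cell L)) : Prop :=
  ∃ (i : Axis) (α : ExtCoord L),
    π = quarterTurn i α ∨ π = quarterTurn i α ^ 2 ∨ π = (quarterTurn i α)⁻¹

/-! ### The edged cube -/

/-- How a quarter-turn about axis `i` transports the face tag of a cell. -/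
def tagMap : Axis → Axis → Axis
  | .x, .x => .x
  | .x, .y => .z
  | .x, .z => .y
  | .y, .x => .z
  | .y, .y => .y
  | .y, .z => .x
  | .z, .x => .y
  | .z, .y => .x
  | .z, .z => .z

@[simp] theorem tagMap_tagMap (i j : Axis) : tagMap i (tagMap i j) = j := by
  cases i <;> cases j <;> rfl

theorem isInfB_coord_tagMap_rot {L : Type u} (i j : Axis) (p : Triple L) :
    ((rot i p).coord (tagMap i j)).isInfB = (p.coord j).isInfB := by
  cases i <;> cases j <;> simp [rot, Triple.coord, tagMap]

theorem isInfB_coord_tagMap_rotInv {L : Type u} (i j : Axis) (p : Triple L) :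
    ((rotInv i p).coord (tagMap i j)).isInfB = (p.coord j).isInfB := by
  cases i <;> cases j <;> simp [rotInv, Triple.coord, tagMap]

/-- A cell of the *edged* cube `Q̄_L`: a point of the ambient space together with a tag
naming an axis, such that the coordinate along the tagged axis is infinite (the tag
indicates the face to which the cell belongs). -/
def ECell (L : Type u) : Type u := {q : Triple L × Axis // (q.1.coord q.2).isInfB = true}

open Classical in
/-- The underlying map of the quarter-turn twist `T_{i,α}` of the edged cube. -/
noncomputable def eqtFun {L : Type u} (i : Axis) (α : ExtCoord L) (q : Triple L × Axis) :
    Triple L × Axis :=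
  if q.1.coord i = α then (rot i q.1, tagMap i q.2) else q

open Classical in
/-- The underlying map of the reverse quarter-turn twist of the edged cube. -/
noncomputable def eqtFunInv {L : Type u} (i : Axis) (α : ExtCoord L) (q : Triple L × Axis) :
    Triple L × Axis :=
  if q.1.coord i = α then (rotInv i q.1, tagMap i q.2) else q

theorem eqtFunInv_eqtFun {L : Type u} (i : Axis) (α : ExtCoord L) (q : Triple L × Axis) :
    eqtFunInv i α (eqtFun i α q) = q := by
  classical
  by_cases h : q.1.coord i = α <;> simp [eqtFun, eqtFunInv, h]

theorem eqtFun_eqtFunInv {L : Type u} (i : Axis) (α : ExtCoord L) (q : Triple L × Axis) :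
    eqtFun i α (eqtFunInv i α q) = q := by
  classical
  by_cases h : q.1.coord i = α <;> simp [eqtFun, eqtFunInv, h]

theorem isInfB_eqtFun {L : Type u} (i : Axis) (α : ExtCoord L) (q : Triple L × Axis) :
    (((eqtFun i α q).1.coord (eqtFun i α q).2)).isInfB = ((q.1.coord q.2)).isInfB := by
  classical
  by_cases h : q.1.coord i = α <;> simp [eqtFun, h, isInfB_coord_tagMap_rot]

theorem isInfB_eqtFunInv {L : Type u} (i : Axis) (α : ExtCoord L) (q : Triple L × Axis) :
    (((eqtFunInv i α q).1.coord (eqtFunInv i α q).2)).isInfB = ((q.1.coord q.2)).isInfB := by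
  classical
  by_cases h : q.1.coord i = α <;> simp [eqtFunInv, h, isInfB_coord_tagMap_rotInv]

/-- The quarter-turn twist `T_{i,α}` of the edged cube, as a permutation of cells.  A face
twist moves, besides the cells of its face, also the coupled edge and corner cells of the
adjacent faces lying in the twisted layer. -/
noncomputable def equarterTurn {L : Type u} (i : Axis) (α : ExtCoord L) :
    Equiv.Perm (ECell L) where
  toFun c := ⟨eqtFun i α c.1, by rw [isInfB_eqtFun]; exact c.2⟩
  invFun c := ⟨eqtFunInv i α c.1, by rw [isInfB_eqtFunInv]; exact c.2⟩
  left_inv c := Subtype.ext (eqtFunInv_eqtFun i α c.1)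
  right_inv c := Subtype.ext (eqtFun_eqtFunInv i α c.1)

/-- The basic twists of the edged cube. -/
def IsEBasic (L : Type u) (π : Equiv.Perm (ECell L)) : Prop :=
  ∃ (i : Axis) (α : ExtCoord L),
    π = equarterTurn i α ∨ π = equarterTurn i α ^ 2 ∨ π = (equarterTurn i α)⁻¹

/-! ### Transfinite sequences of twists and their action on labellings -/

open Classical in
/-- The eventual value of an ordinal-indexed family of `Option`-values: `some v` if the family
stabilizes on `some v` before `lam`, and `none` otherwise. -/
noncomputable def eventualVal {X : Type u} (lam : Ordinal.{v})
    (g : ∀ η, η < lam → Option X) : Option X :=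
  if h : ∃ v : X, ∃ γ, γ < lam ∧ ∀ η (hη : η < lam), γ ≤ η → g η hη = some v
  then some h.choose else none

/-- Applying an ordinal-indexed sequence of permutations to an initial labelling:
`run σ f0 θ` is the labelling obtained after the first `θ` moves, with
`f_{η+1}(c) = f_η(σ_η⁻¹ c)` at successors and the eventual value (or `NaC = none`)
at limits. -/
noncomputable def run {Cl : Type v} {X : Type u} (σ : Ordinal.{v} → Equiv.Perm Cl)
    (f0 : Cl → Option X) (θ : Ordinal.{v}) : Cl → Option X :=
  Ordinal.limitRecOn (motive := fun _ => Cl → Option X) θ f0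
    (fun η fη c => fη ((σ η)⁻¹ c))
    (fun lam _ prev c => eventualVal lam (fun η h => prev η h c))

/-- A (transfinite) sequence of twists of length `len`, each of which satisfies the
predicate `B` (being a basic twist). -/
structure TwistSeq (Cl : Type v) (B : Equiv.Perm Cl → Prop) : Type (v + 1) where
  len : Ordinal.{v}
  seq : Ordinal.{v} → Equiv.Perm Cl
  basic : ∀ η, η < len → B (seq η)

namespace TwistSeq

variable {Cl : Type v} {B : Equiv.Perm Cl → Prop}

/-- The terminal labelling obtained by applying a sequence of twists to `f0`. -/
noncomputable def terminal (s : TwistSeq Cl B) {X : Type u} (f0 : Cl → Option X) :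
    Cl → Option X :=
  run s.seq f0 s.len

/-- A sequence of twists is convergent over `f0` if the terminal labelling is legal,
i.e. never takes the value `NaC = none`. -/
def ConvOver (s : TwistSeq Cl B) {X : Type u} (f0 : Cl → Option X) : Prop :=
  ∀ c, s.terminal f0 c ≠ none

/-- A sequence of twists is universally convergent if it is convergent over the identity
labelling. -/
def UnivConv (s : TwistSeq Cl B) : Prop := s.ConvOver (fun c => some c)

/-- A sequence is twist-finite if each twist occurs in it only finitely many times. -/
def TwistFinite (s : TwistSeq Cl B) : Prop :=
  ∀ π : Equiv.Perm Cl, {η : Ordinal | η < s.len ∧ s.seq η = π}.Finite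

/-- Two sequences are equivalent, `σ⃗ ∼ τ⃗`, when they produce the same terminal
configuration over every initial configuration. -/
def Sim (s t : TwistSeq Cl B) : Prop :=
  ∀ f : Cl → Option Color, s.terminal f = t.terminal f

/-- Concatenation of twist sequences: `s.concat t` performs `s` and then `t`. -/
noncomputable def concat (s t : TwistSeq Cl B) : TwistSeq Cl B where
  len := s.len + t.len
  seq := fun η => if η < s.len then s.seq η else t.seq (η - s.len)
  basic := by
    intro η hη
    by_cases h : η < s.len
    · simpa [h] using s.basic η h
    · have hc : 0 < t.len := by
        rcases eq_zero_or_pos t.len with h0 | h0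
        · rw [h0, add_zero] at hη; exact absurd hη h
        · exact h0
      have h2 : η - s.len < t.len := Ordinal.sub_lt_of_lt_add hη hc
      simpa [h] using t.basic _ h2

/-- The empty sequence of twists. -/
def empty (Cl : Type v) (B : Equiv.Perm Cl → Prop) : TwistSeq Cl B where
  len := 0
  seq := fun _ => 1
  basic := fun η hη => absurd hη (by simp)

/-- `n`-fold self-concatenation of a sequence of twists. -/
noncomputable def npow (s : TwistSeq Cl B) : ℕ → TwistSeq Cl B
  | 0 => empty Cl B
  | n + 1 => (npow s n).concat s

end TwistSeq

/-- Basic sequences of twists of the edgeless cube `Q_L`. -/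
abbrev BasicSeq (L : Type u) := TwistSeq (Cell L) (IsBasic L)

/-- Basic sequences of twists of the edged cube `Q̄_L`. -/
abbrev EBasicSeq (L : Type u) := TwistSeq (ECell L) (IsEBasic L)

/-- `f` is accessible from `f0` when some basic sequence applied to `f0` is convergent with
terminal configuration `f`. -/
def Accessible {Cl : Type v} (B : Equiv.Perm Cl → Prop) (f0 f : Cl → Option Color) : Prop :=
  ∃ s : TwistSeq Cl B, s.ConvOver f0 ∧ s.terminal f0 = f

/-- A labelling is legal if it never takes the value `NaC = none`. -/
def IsLegal {Cl : Type v} {X : Type u} (f : Cl → Option X) : Prop := ∀ c, f c ≠ none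

/-! ### Clusters, faces, and distinguished configurations -/

/-- The group of permutations of cells of the edgeless cube generated by the basic twists. -/
def twistGroup (L : Type u) : Subgroup (Equiv.Perm (Cell L)) :=
  Subgroup.closure {π | IsBasic L π}

/-- The cluster of a cell of the edgeless cube: its orbit under the group generated by the
basic twists. -/
def cluster {L : Type u} (c : Cell L) : Set (Cell L) :=
  {d | ∃ g ∈ twistGroup L, g c = d}

/-- The group of permutations of cells of the edged cube generated by the basic twists. -/
def etwistGroup (L : Type u) : Subgroup (Equiv.Perm (ECell L)) :=
  Subgroup.closure {π | IsEBasic L π}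

/-- The cluster of a cell of the edged cube. -/
def ecluster {L : Type u} (c : ECell L) : Set (ECell L) :=
  {d | ∃ g ∈ etwistGroup L, g c = d}

open Classical in
/-- The solved configuration of the edgeless cube: each face gets one of six distinct
colors. -/
noncomputable def fSolved (L : Type u) : Cell L → Option Color := fun c =>
  if c.1.1 = ExtCoord.posInf then some .red
  else if c.1.1 = ExtCoord.negInf then some .orange
  else if c.1.2.1 = ExtCoord.posInf then some .blue
  else if c.1.2.1 = ExtCoord.negInf then some .green
  else if c.1.2.2 = ExtCoord.posInf then some .white
  else some .yellow

/-- The color of each face: the face is named by the axis and the sign (`true` = `+∞`). -/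
def faceColor : Axis → Bool → Color
  | .x, true => .red
  | .x, false => .orange
  | .y, true => .blue
  | .y, false => .green
  | .z, true => .white
  | .z, false => .yellow

open Classical in
/-- The solved configuration of the edged cube. -/
noncomputable def efSolved (L : Type u) : ECell L → Option Color := fun c =>
  if c.1.1.coord c.1.2 = ExtCoord.posInf then some (faceColor c.1.2 true)
  else some (faceColor c.1.2 false)

/-- A center cell of the edgeless cube: two of its coordinates are `0`. -/
def IsCenter {L : Type u} (c : Cell L) : Prop := zeroCount c.1 = 2

/-- The global rotation of the whole cube about an axis, as a permutation of the cells of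
the edgeless cube. -/
def rotAllPerm {L : Type u} (i : Axis) : Equiv.Perm (Cell L) where
  toFun c := ⟨rot i c.1, by rw [infCount_rot]; exact c.2⟩
  invFun c := ⟨rotInv i c.1, by rw [infCount_rotInv]; exact c.2⟩
  left_inv c := Subtype.ext (rotInv_rot i c.1)
  right_inv c := Subtype.ext (rot_rotInv i c.1)

/-- The group of global rotations of the edgeless cube. -/
def rotGroup (L : Type u) : Subgroup (Equiv.Perm (Cell L)) :=
  Subgroup.closure (Set.range (rotAllPerm (L := L)))

/-- A configuration of the edgeless cube is standard if every non-center cluster contains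
exactly four cells of each of the six colors, and its restriction to the center cluster is
obtained from the solved configuration by a global rotation of the cube. -/
def Standard {L : Type u} (f : Cell L → Option Color) : Prop :=
  (∀ c : Cell L, ¬IsCenter c → ∀ γ : Color, {d ∈ cluster c | f d = some γ}.ncard = 4) ∧
  ∃ g ∈ rotGroup L, ∀ d : Cell L, IsCenter d → f d = fSolved L (g⁻¹ d)

/-- A configuration is invariant under all quarter-turn face twists. -/
def FaceInvariant {L : Type u} (f : Cell L → Option Color) : Prop :=
  ∀ (i : Axis) (α : ExtCoord L), α.isInfB = true →
    ∀ c : Cell L, f ((quarterTurn i α)⁻¹ c) = f c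

/-! ### Quadrants and cluster configurations -/

/-- The upper-right quadrant `D` of the Front face: the cells `(x, y, +∞)` with `x ∈ L`
and `y ∈ {0} ∪ L`; every non-center cluster has a unique representative in `D`. -/
def Dset (L : Type u) : Set (Cell L) :=
  {c | ∃ (a : L) (b : ExtCoord L), (b = ExtCoord.zero ∨ ∃ r : L, b = ExtCoord.pos r) ∧
    c.1 = (ExtCoord.pos a, b, ExtCoord.posInf)}

/-- Two cells lie in the same face quadrant (an image of `D` under a global rotation). -/
def SameQuadrant {L : Type u} (d d' : Cell L) : Prop :=
  ∃ g ∈ rotGroup L, d ∈ (fun c => g c) '' Dset L ∧ d' ∈ (fun c => g c) '' Dset L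

/-! ### Coupled cells of the edged cube -/

/-- Two cells of the edged cube are coupled if they occupy the same location but belong to
different faces (they are parts of a common edge or corner cubie). -/
def Coupled {L : Type u} (c c' : ECell L) : Prop := c.1.1 = c'.1.1 ∧ c.1.2 ≠ c'.1.2

/-- An edge cell: exactly two infinite coordinates. -/
def IsEdgeCell {L : Type u} (c : ECell L) : Prop := infCount c.1.1 = 2

/-- A corner cell: three infinite coordinates. -/
def IsCornerCell {L : Type u} (c : ECell L) : Prop := infCount c.1.1 = 3

/-- An edge-cross cell: an edge cell one of whose coordinates is `0`. -/
def IsEdgeCross {L : Type u} (c : ECell L) : Prop :=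
  IsEdgeCell c ∧ 0 < zeroCount c.1.1

end InfRubik

/-!
Both cubes are instances of one abstract situation: cells have positions in `L̄†³`, and each
twist `T_{i,α}` acts on them as the rotation of the layer `i = α` acts on positions. Then every
cell is moved by only finitely many basic twists, every basic twist moves some cell, and every
cell lies in a finite set of cells invariant under all basic twists (those whose coordinates are
coordinates of the given cell or their reflections).

If the sequence is twist-finite, each cell is moved only finitely often, so at every limit stage
the label of each cell has stabilised. Conversely, if some twist `π` occurs infinitely often, it
occurs cofinally below some limit stage `λ`. Over the identity labelling the legal labels stay
pairwise distinct, so a cell moved by `π⁻¹` cannot stabilise below `λ` and is `NaC` at `λ`. In a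
finite invariant set containing that cell the number of legal labels never increases again, so
the terminal labelling is not legal.
-/

namespace InfRubik

open Set

universe w

theorem exists_lt_subset_Iio_of_finite {α : Type*} [LinearOrder α] [OrderBot α] [SuccOrder α]
    {θ : α} (hθ : Order.IsSuccLimit θ) {A : Set α} (hA : A.Finite) (hAθ : A ⊆ Iio θ) :
    ∃ γ < θ, A ⊆ Iio γ :=
  ⟨hA.toFinset.sup Order.succ,
    (Finset.sup_lt_iff hθ.bot_lt).2 fun _ hη => hθ.succ_lt (hAθ (hA.mem_toFinset.1 hη)),
    fun _ hη => (Order.lt_succ_of_not_isMax (hAθ hη).not_isMax).trans_le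
      (Finset.le_sup (f := Order.succ) (hA.mem_toFinset.2 hη))⟩

theorem exists_isSuccLimit_cofinal_of_infinite {p : Ordinal.{w} → Prop} {θ : Ordinal.{w}}
    (h : {η | η < θ ∧ p η}.Infinite) :
    ∃ lam ≤ θ, Order.IsSuccLimit lam ∧ ∀ γ < lam, ∃ η, γ ≤ η ∧ η < lam ∧ p η := by
  obtain ⟨lam, hlam, hmin⟩ := Ordinal.lt_wf.has_min {lam | {η | η < lam ∧ p η}.Infinite} ⟨θ, h⟩
  have hfin : ∀ γ < lam, {η | η < γ ∧ p η}.Finite := fun γ hγ =>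
    not_infinite.1 fun hγinf => hmin γ hγinf hγ
  refine ⟨lam, not_lt.1 (hmin θ h), ?_, fun γ hγ => ?_⟩
  · rcases Ordinal.zero_or_succ_or_isSuccLimit lam with rfl | ⟨κ, rfl⟩ | hlim
    · simp at hlam
    · refine absurd (((hfin κ (Order.lt_succ κ)).insert κ).subset ?_) hlam
      rintro η ⟨hη, hp⟩
      rcases (Order.lt_succ_iff.1 hη).lt_or_eq with hηκ | rfl
      exacts [Or.inr ⟨hηκ, hp⟩, Or.inl rfl]
    · exact hlim
  · by_contra! hnone
    refine hlam ((hfin γ hγ).subset ?_)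
    rintro η ⟨hη, hp⟩
    exact ⟨lt_of_not_ge fun hγη => hnone η hγη hη hp, hp⟩

section Run

variable {Cl : Type v} {X : Type w} (σ : Ordinal.{v} → Equiv.Perm Cl) (f0 : Cl → Option X)

@[simp] theorem run_zero : run σ f0 0 = f0 :=
  Ordinal.limitRecOn_zero _ _ _

@[simp] theorem run_add_one (η : Ordinal.{v}) :
    run σ f0 (η + 1) = fun c => run σ f0 η ((σ η)⁻¹ c) :=
  Ordinal.limitRecOn_add_one _ _ _ _

theorem run_of_isSuccLimit {lam : Ordinal.{v}} (h : Order.IsSuccLimit lam) :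
    run σ f0 lam = fun c => eventualVal lam fun η _ => run σ f0 η c :=
  Ordinal.limitRecOn_limit _ _ _ _ h

theorem eventualVal_eq_of_forall_le {lam γ : Ordinal.{v}} {g : ∀ η, η < lam → Option X}
    {a : Option X} (hγ : γ < lam) (h : ∀ η (hη : η < lam), γ ≤ η → g η hη = a) :
    eventualVal lam g = a := by
  have hstab : ∀ v δ, δ < lam → (∀ η (hη : η < lam), δ ≤ η → g η hη = some v) → a = some v :=
    fun v δ hδ hv => (h _ (max_lt hγ hδ) (le_max_left _ _)).symm.trans
      (hv _ (max_lt hγ hδ) (le_max_right _ _))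
  unfold eventualVal
  split_ifs with hex
  · obtain ⟨δ, hδ, hv⟩ := hex.choose_spec
    exact (hstab _ δ hδ hv).symm
  · cases a with
    | none => rfl
    | some v => exact absurd ⟨v, γ, hγ, h⟩ hex

theorem exists_forall_le_of_eventualVal_eq_some {lam : Ordinal.{v}}
    {g : ∀ η, η < lam → Option X} {v : X} (h : eventualVal lam g = some v) :
    ∃ γ < lam, ∀ η (hη : η < lam), γ ≤ η → g η hη = some v := by
  unfold eventualVal at h
  split_ifs at h with hex
  obtain ⟨γ, hγ, hv⟩ := hex.choose_spec
  exact ⟨γ, hγ, Option.some_injective X h ▸ hv⟩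

theorem run_eq_of_forall_fixed {c : Cl} {γ θ : Ordinal.{v}} (hγθ : γ ≤ θ)
    (hfix : ∀ η, γ ≤ η → η < θ → σ η c = c) : run σ f0 θ c = run σ f0 γ c := by
  induction θ using Ordinal.limitRecOn with
  | zero => rw [nonpos_iff_eq_zero.1 hγθ]
  | add_one κ ih =>
    rcases hγθ.eq_or_lt with rfl | hγκ
    · rfl
    have hγκ : γ ≤ κ := Order.lt_add_one_iff.1 hγκ
    have hκ : (σ κ)⁻¹ c = c := Equiv.Perm.inv_eq_iff_eq.2 (hfix κ hγκ (lt_add_one κ)).symm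
    simp only [run_add_one, hκ]
    exact ih hγκ fun η h1 h2 => hfix η h1 (h2.trans (lt_add_one κ))
  | limit lam hlim ih =>
    rcases hγθ.eq_or_lt with rfl | hγlam
    · rfl
    rw [run_of_isSuccLimit σ f0 hlim]
    exact eventualVal_eq_of_forall_le hγlam fun η hη hγη =>
      ih η hη hγη fun μ h1 h2 => hfix μ h1 (h2.trans hη)

theorem isLegal_run_of_finite {θ : Ordinal.{v}} (hf0 : IsLegal f0)
    (hfin : ∀ c, {η | η < θ ∧ σ η c ≠ c}.Finite) : IsLegal (run σ f0 θ) := by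
  induction θ using Ordinal.limitRecOn with
  | zero => simpa using hf0
  | add_one κ ih =>
    intro c
    rw [run_add_one]
    exact ih (fun c => (hfin c).subset fun η hη => ⟨hη.1.trans (lt_add_one κ), hη.2⟩) _
  | limit lam hlim ih =>
    intro c
    obtain ⟨γ, hγ, hmoved⟩ := exists_lt_subset_Iio_of_finite hlim (hfin c) fun η hη => hη.1
    rw [run_eq_of_forall_fixed σ f0 hγ.le fun η hγη hη =>
      not_not.1 fun hne => (hmoved ⟨hη, hne⟩).not_ge hγη]
    exact ih γ hγ (fun c => (hfin c).subset fun η hη => ⟨hη.1.trans hγ, hη.2⟩) c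

theorem injOn_run {θ : Ordinal.{v}} (hf0 : InjOn f0 {c | f0 c ≠ none}) :
    InjOn (run σ f0 θ) {c | run σ f0 θ c ≠ none} := by
  induction θ using Ordinal.limitRecOn with
  | zero => simpa using hf0
  | add_one κ ih =>
    intro c₁ h₁ c₂ h₂ h
    simp only [run_add_one] at h₁ h₂ h
    exact (σ κ)⁻¹.injective (ih h₁ h₂ h)
  | limit lam hlim ih =>
    intro c₁ h₁ c₂ _ h
    obtain ⟨v, hv⟩ := Option.ne_none_iff_exists'.1 h₁
    rw [run_of_isSuccLimit σ f0 hlim] at hv h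
    obtain ⟨γ₁, hγ₁, hv₁⟩ := exists_forall_le_of_eventualVal_eq_some hv
    obtain ⟨γ₂, hγ₂, hv₂⟩ := exists_forall_le_of_eventualVal_eq_some (h ▸ hv)
    have hγ := max_lt hγ₁ hγ₂
    have e₁ := hv₁ _ hγ (le_max_left _ _)
    have e₂ := hv₂ _ hγ (le_max_right _ _)
    exact ih _ hγ (Option.ne_none_iff_exists'.2 ⟨v, e₁⟩) (Option.ne_none_iff_exists'.2 ⟨v, e₂⟩)
      (e₁.trans e₂.symm)

theorem exists_run_eq_of_le {S : Set Cl} {γ θ : Ordinal.{v}}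
    (hS : ∀ η < θ, MapsTo ⇑(σ η)⁻¹ S S) (hγθ : γ ≤ θ) {c : Cl} (hc : c ∈ S) {v : X}
    (hv : run σ f0 θ c = some v) : ∃ c' ∈ S, run σ f0 γ c' = some v := by
  induction θ using Ordinal.limitRecOn generalizing c with
  | zero => exact ⟨c, hc, nonpos_iff_eq_zero.1 hγθ ▸ hv⟩
  | add_one κ ih =>
    rcases hγθ.eq_or_lt with rfl | hγκ
    · exact ⟨c, hc, hv⟩
    rw [run_add_one] at hv
    exact ih (fun η hη => hS η (hη.trans (lt_add_one κ))) (Order.lt_add_one_iff.1 hγκ)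
      (hS κ (lt_add_one κ) hc) hv
  | limit lam hlim ih =>
    rcases hγθ.eq_or_lt with rfl | hγlam
    · exact ⟨c, hc, hv⟩
    rw [run_of_isSuccLimit σ f0 hlim] at hv
    obtain ⟨δ, hδ, hδv⟩ := exists_forall_le_of_eventualVal_eq_some hv
    have hη := max_lt hγlam hδ
    exact ih _ hη (fun μ hμ => hS μ (hμ.trans hη)) (le_max_left _ _) hc
      (hδv _ hη (le_max_right _ _))

theorem ncard_run_ne_none_antitone {S : Set Cl} (hSfin : S.Finite) {γ θ : Ordinal.{v}}
    (hS : ∀ η < θ, MapsTo ⇑(σ η)⁻¹ S S) (hf0 : InjOn f0 {c | f0 c ≠ none}) (hγθ : γ ≤ θ) :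
    {c ∈ S | run σ f0 θ c ≠ none}.ncard ≤ {c ∈ S | run σ f0 γ c ≠ none}.ncard := by
  have himage : run σ f0 θ '' {c ∈ S | run σ f0 θ c ≠ none} ⊆
      run σ f0 γ '' {c ∈ S | run σ f0 γ c ≠ none} := by
    rintro _ ⟨c, ⟨hc, hne⟩, rfl⟩
    obtain ⟨v, hv⟩ := Option.ne_none_iff_exists'.1 hne
    obtain ⟨c', hc', hc'v⟩ := exists_run_eq_of_le σ f0 hS hγθ hc hv
    exact ⟨c', ⟨hc', Option.ne_none_iff_exists'.2 ⟨v, hc'v⟩⟩, hc'v.trans hv.symm⟩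
  calc {c ∈ S | run σ f0 θ c ≠ none}.ncard
      = (run σ f0 θ '' {c ∈ S | run σ f0 θ c ≠ none}).ncard :=
        ((injOn_run σ f0 hf0).mono fun _ hc => hc.2).ncard_image.symm
    _ ≤ (run σ f0 γ '' {c ∈ S | run σ f0 γ c ≠ none}).ncard :=
        ncard_le_ncard himage ((hSfin.subset (sep_subset _ _)).image _)
    _ ≤ {c ∈ S | run σ f0 γ c ≠ none}.ncard :=
        ncard_image_le (hSfin.subset (sep_subset _ _))

theorem run_eq_none_of_frequently {lam : Ordinal.{v}} (hlim : Order.IsSuccLimit lam)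
    (hf0 : InjOn f0 {c | f0 c ≠ none}) {π : Equiv.Perm Cl}
    (hfreq : ∀ γ < lam, ∃ η, γ ≤ η ∧ η < lam ∧ σ η = π) {c : Cl} (hc : π⁻¹ c ≠ c) :
    run σ f0 lam c = none := by
  by_contra hne
  obtain ⟨v, hv⟩ := Option.ne_none_iff_exists'.1 hne
  rw [run_of_isSuccLimit σ f0 hlim] at hv
  obtain ⟨γ, hγ, hγv⟩ := exists_forall_le_of_eventualVal_eq_some hv
  obtain ⟨η, hγη, hη, rfl⟩ := hfreq γ hγ
  have hbefore : run σ f0 η c = some v := hγv η hη hγη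
  have hafter : run σ f0 η ((σ η)⁻¹ c) = some v := by
    simpa using hγv (η + 1) (hlim.add_one_lt hη) (hγη.trans le_self_add)
  exact hc (injOn_run σ f0 hf0 (Option.ne_none_iff_exists'.2 ⟨v, hafter⟩)
    (Option.ne_none_iff_exists'.2 ⟨v, hbefore⟩)
    (hafter.trans hbefore.symm))

end Run

namespace TwistSeq

variable {Cl : Type v} {B : Equiv.Perm Cl → Prop} (s : TwistSeq Cl B)

theorem univConv_of_twistFinite (hmoves : ∀ c, {π | B π ∧ π c ≠ c}.Finite)
    (h : s.TwistFinite) : s.UnivConv := by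
  refine isLegal_run_of_finite s.seq _ (fun c => Option.some_ne_none c) fun c =>
    ((hmoves c).biUnion fun π _ => h π).subset ?_
  rintro η ⟨hη, hmoved⟩
  exact mem_biUnion ⟨s.basic η hη, hmoved⟩ ⟨hη, rfl⟩

theorem twistFinite_of_univConv (hne : ∀ π, B π → π ≠ 1)
    (hinv : ∀ c, ∃ S : Set Cl, S.Finite ∧ c ∈ S ∧ ∀ π, B π → MapsTo π S S)
    (h : s.UnivConv) : s.TwistFinite := by
  intro π
  by_contra hπ
  obtain ⟨lam, hlam, hlim, hfreq⟩ := exists_isSuccLimit_cofinal_of_infinite hπ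
  have hπB : B π := by
    obtain ⟨η, -, hη, rfl⟩ := hfreq 0 hlim.bot_lt
    exact s.basic η (hη.trans_le hlam)
  obtain ⟨c, hc⟩ : ∃ c, π⁻¹ c ≠ c := by
    by_contra! hfix
    exact hne π hπB (inv_eq_one.1 (Equiv.ext hfix))
  obtain ⟨S, hSfin, hcS, hSinv⟩ := hinv c
  have : Finite S := hSfin
  have hS : ∀ η < s.len, MapsTo ⇑(s.seq η)⁻¹ S S := fun η hη =>
    Equiv.Perm.perm_symm_mapsTo_of_mapsTo _ (hSinv _ (s.basic η hη))
  have hid : InjOn (fun c : Cl => some c) {c | some c ≠ none} := (Option.some_injective Cl).injOn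
  have hlost : {d ∈ S | run s.seq (fun c => some c) lam d ≠ none} ⊂ S :=
    (sep_subset _ _).ssubset_of_mem_notMem hcS fun hc' =>
      hc'.2 (run_eq_none_of_frequently s.seq _ hlim hid hfreq hc)
  have hfull : {d ∈ S | run s.seq (fun c => some c) s.len d ≠ none} = S :=
    sep_eq_self_iff_mem_true.2 fun d _ => h d
  have := ncard_run_ne_none_antitone s.seq _ hSfin hS hid hlam
  rw [hfull] at this
  exact (ncard_lt_ncard hlost hSfin).not_ge this

theorem univConv_iff_twistFinite (hmoves : ∀ c, {π | B π ∧ π c ≠ c}.Finite)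
    (hne : ∀ π, B π → π ≠ 1)
    (hinv : ∀ c, ∃ S : Set Cl, S.Finite ∧ c ∈ S ∧ ∀ π, B π → MapsTo π S S) :
    s.UnivConv ↔ s.TwistFinite :=
  ⟨s.twistFinite_of_univConv hne hinv, s.univConv_of_twistFinite hmoves⟩

end TwistSeq

instance : Fintype Axis :=
  ⟨{.x, .y, .z}, fun a => by cases a <;> simp⟩

section LayerTwists

variable {L : Type u} {Cl : Type w}

theorem qtTriple_of_coord_eq {i : Axis} {α : ExtCoord L} {p : Triple L} (h : p.coord i = α) :
    qtTriple i α p = rot i p :=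
  if_pos h

theorem qtTripleInv_of_coord_eq {i : Axis} {α : ExtCoord L} {p : Triple L}
    (h : p.coord i = α) : qtTripleInv i α p = rotInv i p :=
  if_pos h

theorem mapsTo_rot {W : Set (ExtCoord L)} (hW : ∀ a ∈ W, a.reflect ∈ W) (i : Axis) :
    MapsTo (rot i) (W ×ˢ W ×ˢ W) (W ×ˢ W ×ˢ W) := by
  rintro ⟨a, b, c⟩ ⟨ha, hb, hc⟩
  cases i
  exacts [⟨ha, hW c hc, hb⟩, ⟨hc, hb, hW a ha⟩, ⟨hW b hb, ha, hc⟩]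

theorem mapsTo_rotInv {W : Set (ExtCoord L)} (hW : ∀ a ∈ W, a.reflect ∈ W) (i : Axis) :
    MapsTo (rotInv i) (W ×ˢ W ×ˢ W) (W ×ˢ W ×ˢ W) := by
  rintro ⟨a, b, c⟩ ⟨ha, hb, hc⟩
  cases i
  exacts [⟨ha, hc, hW b hb⟩, ⟨hW c hc, hb, ha⟩, ⟨hb, hW a ha, hc⟩]

theorem mapsTo_qtTriple {W : Set (ExtCoord L)} (hW : ∀ a ∈ W, a.reflect ∈ W) (i : Axis)
    (α : ExtCoord L) : MapsTo (qtTriple i α) (W ×ˢ W ×ˢ W) (W ×ˢ W ×ˢ W) := fun p hp => by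
  unfold qtTriple
  split_ifs
  exacts [mapsTo_rot hW i hp, hp]

theorem mapsTo_qtTripleInv {W : Set (ExtCoord L)} (hW : ∀ a ∈ W, a.reflect ∈ W) (i : Axis)
    (α : ExtCoord L) : MapsTo (qtTripleInv i α) (W ×ˢ W ×ˢ W) (W ×ˢ W ×ˢ W) := fun p hp => by
  unfold qtTripleInv
  split_ifs
  exacts [mapsTo_rotInv hW i hp, hp]

theorem exists_finite_reflect_closed (p : Triple L) :
    ∃ W : Set (ExtCoord L), W.Finite ∧ p ∈ W ×ˢ W ×ˢ W ∧ ∀ a ∈ W, a.reflect ∈ W := by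
  set C : Set (ExtCoord L) := {p.1, p.2.1, p.2.2}
  have hC : C.Finite := toFinite C
  refine ⟨C ∪ ExtCoord.reflect ⁻¹' C, hC.union (hC.preimage ?_), ?_, ?_⟩
  · exact (Function.LeftInverse.injective ExtCoord.reflect_reflect).injOn
  · exact ⟨Or.inl (by simp [C]), Or.inl (by simp [C]), Or.inl (by simp [C])⟩
  · rintro a (ha | ha)
    exacts [Or.inr (by simpa using ha), Or.inl ha]

def IsLayerTwist (T : Axis → ExtCoord L → Equiv.Perm Cl) (π : Equiv.Perm Cl) : Prop :=
  ∃ (i : Axis) (α : ExtCoord L), π = T i α ∨ π = T i α ^ 2 ∨ π = (T i α)⁻¹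

structure IsLayerAction (pos : Cl → Triple L) (T : Axis → ExtCoord L → Equiv.Perm Cl) : Prop where
  pos_apply : ∀ i α c, pos (T i α c) = qtTriple i α (pos c)
  apply_of_coord_ne : ∀ i α c, (pos c).coord i ≠ α → T i α c = c

/-- The off-axis coordinate `u` is infinite unless the layer is a face, in which case it is taken
in `L`: a cell has exactly one infinite coordinate. -/
def layerProbe (i : Axis) (α : ExtCoord L) (a : L) : Triple L :=
  let u := if α.isInfB then ExtCoord.pos a else ExtCoord.posInf
  match i with
  | .x => (α, u, .zero)
  | .y => (u, α, .zero)
  | .z => (u, .zero, α)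

theorem layerProbe_spec (i : Axis) (α : ExtCoord L) (a : L) :
    infCount (layerProbe i α a) = 1 ∧ (layerProbe i α a).coord i = α ∧
      rot i (layerProbe i α a) ≠ layerProbe i α a ∧
      rot i (rot i (layerProbe i α a)) ≠ layerProbe i α a := by
  cases i <;> cases α <;>
    simp [layerProbe, infCount, rot, Triple.coord, ExtCoord.isInfB, ExtCoord.reflect]

namespace IsLayerAction

variable {pos : Cl → Triple L} {T : Axis → ExtCoord L → Equiv.Perm Cl}

theorem pos_inv_apply (hT : IsLayerAction pos T) (i : Axis) (α : ExtCoord L) (c : Cl) :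
    pos ((T i α)⁻¹ c) = qtTripleInv i α (pos c) := by
  conv_rhs => rw [← Equiv.apply_symm_apply (T i α) c, hT.pos_apply, qtTripleInv_qtTriple]
  rfl

theorem finite_setOf_moves (hT : IsLayerAction pos T) (c : Cl) :
    {π | IsLayerTwist T π ∧ π c ≠ c}.Finite := by
  refine (finite_iUnion fun i : Axis =>
    (toFinite ({T i ((pos c).coord i), T i ((pos c).coord i) ^ 2,
      (T i ((pos c).coord i))⁻¹} : Set (Equiv.Perm Cl)))).subset ?_
  rintro π ⟨⟨i, α, hπ⟩, hmoved⟩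
  obtain rfl : (pos c).coord i = α := by
    by_contra hne
    have hfix := hT.apply_of_coord_ne i α c hne
    rcases hπ with rfl | rfl | rfl
    · exact hmoved hfix
    · exact hmoved (by rw [sq, Equiv.Perm.mul_apply, hfix, hfix])
    · exact hmoved (Equiv.Perm.inv_eq_iff_eq.2 hfix.symm)
  exact mem_iUnion.2 ⟨i, by rcases hπ with rfl | rfl | rfl <;> simp⟩

theorem exists_finite_mapsTo (hT : IsLayerAction pos T) (hfin : ∀ p, (pos ⁻¹' {p}).Finite)
    (c : Cl) : ∃ S : Set Cl, S.Finite ∧ c ∈ S ∧ ∀ π, IsLayerTwist T π → MapsTo π S S := by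
  obtain ⟨W, hWfin, hcW, hW⟩ := exists_finite_reflect_closed (pos c)
  have hT' : ∀ i α, MapsTo (T i α) (pos ⁻¹' W ×ˢ W ×ˢ W) (pos ⁻¹' W ×ˢ W ×ˢ W) :=
    fun i α d hd => by
      simpa only [mem_preimage, hT.pos_apply] using mapsTo_qtTriple hW i α hd
  have hTinv : ∀ i α, MapsTo ⇑(T i α)⁻¹ (pos ⁻¹' W ×ˢ W ×ˢ W) (pos ⁻¹' W ×ˢ W ×ˢ W) :=
    fun i α d hd => by
      simpa only [mem_preimage, hT.pos_inv_apply] using mapsTo_qtTripleInv hW i α hd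
  refine ⟨pos ⁻¹' W ×ˢ W ×ˢ W, (hWfin.prod (hWfin.prod hWfin)).preimage' fun p _ => hfin p,
    hcW, ?_⟩
  rintro π ⟨i, α, rfl | rfl | rfl⟩
  · exact hT' i α
  · rw [sq, Equiv.Perm.coe_mul]
    exact (hT' i α).comp (hT' i α)
  · exact hTinv i α

theorem ne_one [Nonempty L] (hT : IsLayerAction pos T)
    (hsurj : ∀ p, infCount p = 1 → ∃ c, pos c = p) {π : Equiv.Perm Cl}
    (hπ : IsLayerTwist T π) : π ≠ 1 := by
  obtain ⟨i, α, hπ⟩ := hπ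
  obtain ⟨a⟩ := ‹Nonempty L›
  obtain ⟨hinf, hcoord, hrot, hrot2⟩ := layerProbe_spec i α a
  obtain ⟨c, hc⟩ := hsurj _ hinf
  have hmoved : pos (π c) ≠ layerProbe i α a := by
    rcases hπ with rfl | rfl | rfl
    · rwa [hT.pos_apply, hc, qtTriple_of_coord_eq hcoord]
    · rwa [sq, Equiv.Perm.mul_apply, hT.pos_apply, hT.pos_apply, hc,
        qtTriple_of_coord_eq hcoord, qtTriple_of_coord_eq (by rwa [coord_rot_self])]
    · rw [hT.pos_inv_apply, hc, qtTripleInv_of_coord_eq hcoord]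
      intro h
      exact hrot (by simpa [h] using rot_rotInv i (layerProbe i α a))
  intro hone
  exact hmoved (by rw [hone, Equiv.Perm.one_apply, hc])

theorem univConv_iff_twistFinite [Nonempty L] (hT : IsLayerAction pos T)
    (hfin : ∀ p, (pos ⁻¹' {p}).Finite) (hsurj : ∀ p, infCount p = 1 → ∃ c, pos c = p)
    (s : TwistSeq Cl (IsLayerTwist T)) : s.UnivConv ↔ s.TwistFinite :=
  s.univConv_iff_twistFinite hT.finite_setOf_moves (fun _ => hT.ne_one hsurj)
    (hT.exists_finite_mapsTo hfin)

end IsLayerAction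

end LayerTwists

variable {L : Type u}

theorem isLayerAction_quarterTurn :
    IsLayerAction (fun c : Cell L => c.1) quarterTurn where
  pos_apply _ _ _ := rfl
  apply_of_coord_ne _ _ _ h := Subtype.ext (if_neg h)

theorem isLayerAction_equarterTurn :
    IsLayerAction (fun c : ECell L => c.1.1) equarterTurn where
  pos_apply i α c := by
    show (eqtFun i α c.1).1 = qtTriple i α c.1.1
    unfold eqtFun qtTriple
    split_ifs <;> rfl
  apply_of_coord_ne _ _ _ h := Subtype.ext (if_neg h)

theorem finite_ecell_fiber (p : Triple L) : ((fun c : ECell L => c.1.1) ⁻¹' {p}).Finite := by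
  refine Finite.of_finite_image (f := fun c : ECell L => c.1.2) (toFinite _) ?_
  intro c hc d hd htag
  exact Subtype.ext (Prod.ext (hc.trans hd.symm) htag)

theorem exists_ecell_of_infCount_eq_one {p : Triple L} (hp : infCount p = 1) :
    ∃ c : ECell L, c.1.1 = p := by
  obtain ⟨a, b, c⟩ := p
  have : a.isInfB ∨ b.isInfB ∨ c.isInfB := by
    by_contra! h
    simp [infCount, h] at hp
  rcases this with h | h | h
  exacts [⟨⟨((a, b, c), .x), h⟩, rfl⟩, ⟨⟨((a, b, c), .y), h⟩, rfl⟩, ⟨⟨((a, b, c), .z), h⟩, rfl⟩]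

end InfRubik

open InfRubik in
/-- A basic sequence is universally convergent iff it is twist-finite, on the edgeless
cube as well as on the edged cube. -/
theorem univConv_iff_twistFinite {L : Type u} [Infinite L] :
    (∀ s : BasicSeq L, s.UnivConv ↔ s.TwistFinite) ∧
    (∀ s : EBasicSeq L, s.UnivConv ↔ s.TwistFinite) :=
  ⟨isLayerAction_quarterTurn.univConv_iff_twistFinite
      (fun _ => (Set.finite_singleton _).preimage Subtype.val_injective.injOn)
      fun p hp => ⟨⟨p, hp⟩, rfl⟩,
    isLayerAction_equarterTurn.univConv_iff_twistFinite finite_ecell_fiber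
      fun _ => exists_ecell_of_infCount_eq_one⟩
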